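/- arXiv:1311.1432 — 3 statements merged into one kernel-verified Lean document; each statement's English description precedes it below -/
import Mathlib

section
/- Let (R, m_R) be a Noetherian local ring of Krull dimension d and let {I_n} be a graded family of m_R-primary ideals in R. Then the limit lim_{n→∞} e(I_n)/n^d exists (as a real number), where e(I_n) is the Hilbert–Samuel multiplicity of I_n. -/
open Filter IsLocalRing

/-- The length of an `R`-module `M`, defined as the Krull dimension of its lattice of
submodules; for modules of finite length this agrees with the Jordan–Hölder
composition length. -/
noncomputable def modLength (R M : Type*) [Ring R] [AddCommGroup M] [Module R M] :
    WithBot ℕ∞ :=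
  Order.krullDim (Submodule R M)

/-- The length of a module as a real number (with junk value `0` for modules of
infinite length). -/
noncomputable def lenR (R M : Type*) [Ring R] [AddCommGroup M] [Module R M] : ℝ :=
  (((modLength R M).unbotD 0).toNat : ℝ)

/-- An ideal `I` of a local ring is `m`-primary if it is primary with radical the
maximal ideal. -/
def IsMaxPrimary (R : Type*) [CommRing R] [IsLocalRing R] (I : Ideal R) : Prop :=
  I.IsPrimary ∧ I.radical = maximalIdeal R

/-!
Two facts about multiplicities reduce the theorem to a Fekete-type argument: `e(J^j) = j^d e(J)`
and `e` is antitone in the ideal, so `J^j ⊆ K` gives `e(K) ≤ j^d e(J)`. For a graded family,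
`I_m^{⌊n/m⌋ + C} ⊆ I_m^{⌊n/m⌋} I_m^C ⊆ I_{m⌊n/m⌋} I_{n mod m} ⊆ I_n` as soon as `m_R^C` lies in
the finitely many ideals `I_0, …, I_{m-1}`. Hence `e(I_n)/n^d ≤ (1/m + C/n)^d e(I_m)`, so the
`limsup` of `e(I_n)/n^d` is at most `inf_m e(I_m)/m^d`, which is at most its `liminf`.
-/

open Topology

theorem exists_tendsto_div_pow_of_le_add_pow_mul {e : ℕ → ℝ} {d : ℕ}
    (he_nonneg : ∀ n, 1 ≤ n → 0 ≤ e n)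
    (hle : ∀ m, 1 ≤ m → ∃ C : ℝ, ∀ᶠ n in atTop, e n ≤ ((n : ℝ) / m + C) ^ d * e m) :
    ∃ L, Tendsto (fun n : ℕ => e n / (n : ℝ) ^ d) atTop (𝓝 L) := by
  set f := fun n : ℕ => e n / (n : ℝ) ^ d
  have hbdd : BddBelow (Set.range fun k => f (k + 1)) :=
    ⟨0, by rintro _ ⟨k, rfl⟩; exact div_nonneg (he_nonneg _ k.succ_pos) (by positivity)⟩
  refine ⟨⨅ k, f (k + 1), tendsto_order.2 ⟨fun a ha => ?_, fun b hb => ?_⟩⟩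
  · filter_upwards [eventually_ge_atTop 1] with n hn
    obtain ⟨k, rfl⟩ := Nat.exists_eq_add_of_le' hn
    exact ha.trans_le (ciInf_le hbdd k)
  · obtain ⟨k, hk⟩ := exists_lt_of_ciInf_lt hb
    set m := k + 1
    obtain ⟨C, hC⟩ := hle m k.succ_pos
    have hlim : Tendsto (fun n : ℕ => (1 / (m : ℝ) + C / n) ^ d * e m) atTop (𝓝 (f m)) := by
      have := ((tendsto_const_div_atTop_nhds_zero_nat C).const_add (1 / (m : ℝ))).pow d
      simpa [f, div_eq_inv_mul, inv_pow] using this.mul_const (e m)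
    filter_upwards [hC, hlim.eventually_lt_const hk, eventually_gt_atTop 0] with n hn hlt hpos
    calc f n ≤ ((n : ℝ) / m + C) ^ d * e m / (n : ℝ) ^ d :=
          div_le_div_of_nonneg_right hn (by positivity)
      _ = (1 / (m : ℝ) + C / n) ^ d * e m := by
          rw [mul_div_right_comm, ← div_pow, add_div, div_div_cancel_left' (by positivity)]
          ring
      _ < b := hlt

theorem lenR_eq_toNat_length (R M : Type*) [Ring R] [AddCommGroup M] [Module R M] :
    lenR R M = (Module.length R M).toNat := by
  rw [lenR, modLength, ← Module.coe_length]
  rfl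

theorem lenR_quotient_le_of_le {R : Type*} [CommRing R] {J K : Ideal R} (hJK : J ≤ K)
    (hJ : IsFiniteLength R (R ⧸ J)) : lenR R (R ⧸ K) ≤ lenR R (R ⧸ J) := by
  rw [lenR_eq_toNat_length, lenR_eq_toNat_length, Nat.cast_le]
  exact ENat.toNat_le_toNat (Module.length_le_of_surjective _ (Submodule.factor_surjective hJK))
    (Module.length_ne_top_iff.mpr hJ)

theorem nonneg_of_tendsto_lenR_div {R : Type*} [CommRing R] {J : Ideal R} {d : ℕ} {eJ : ℝ}
    (hJe : Tendsto (fun k : ℕ => (d.factorial : ℝ) * lenR R (R ⧸ J ^ k) / (k : ℝ) ^ d)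
      atTop (𝓝 eJ)) : 0 ≤ eJ :=
  ge_of_tendsto' hJe fun k => by rw [lenR_eq_toNat_length]; positivity

section LocalRing

variable {R : Type*} [CommRing R] [IsLocalRing R] [IsNoetherianRing R]

theorem isFiniteLength_quotient_of_radical_eq {J : Ideal R} (hJ : J.radical = maximalIdeal R) :
    IsFiniteLength R (R ⧸ J) := by
  have hmin : maximalIdeal R ∈ J.minimalPrimes := by
    rw [← Ideal.radical_minimalPrimes, hJ, Ideal.minimalPrimes_eq_subsingleton_self]
    rfl
  have := quotient_artinian_of_mem_minimalPrimes_of_isLocalRing J hmin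
  have : IsArtinian R (R ⧸ J) :=
    (LinearMap.isArtinian_iff_of_bijective (σ := Ideal.Quotient.mk J)
      { toFun := id, map_add' := fun _ _ => rfl, map_smul' := fun _ _ => rfl }
      Function.bijective_id).mpr ‹_›
  exact isFiniteLength_iff_isNoetherian_isArtinian.mpr ⟨inferInstance, this⟩

theorem le_pow_mul_of_pow_le {J K : Ideal R} (hJ : J.radical = maximalIdeal R) {j d : ℕ}
    (hj : j ≠ 0) (hJK : J ^ j ≤ K) {eJ eK : ℝ}
    (hJe : Tendsto (fun k : ℕ => (d.factorial : ℝ) * lenR R (R ⧸ J ^ k) / (k : ℝ) ^ d)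
      atTop (𝓝 eJ))
    (hKe : Tendsto (fun k : ℕ => (d.factorial : ℝ) * lenR R (R ⧸ K ^ k) / (k : ℝ) ^ d)
      atTop (𝓝 eK)) :
    eK ≤ (j : ℝ) ^ d * eJ := by
  have hJe' := (hJe.comp (tendsto_id.const_mul_atTop' (Nat.pos_of_ne_zero hj))).const_mul
    ((j : ℝ) ^ d)
  refine le_of_tendsto_of_tendsto hKe hJe' ?_
  filter_upwards [eventually_ne_atTop 0] with k hk
  have hlen : lenR R (R ⧸ K ^ k) ≤ lenR R (R ⧸ J ^ (j * k)) := by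
    refine lenR_quotient_le_of_le (pow_mul J j k ▸ Ideal.pow_right_mono hJK k) ?_
    exact isFiniteLength_quotient_of_radical_eq
      ((Ideal.radical_pow (I := J) (by positivity)).trans hJ)
  calc (d.factorial : ℝ) * lenR R (R ⧸ K ^ k) / (k : ℝ) ^ d
      ≤ (d.factorial : ℝ) * lenR R (R ⧸ J ^ (j * k)) / (k : ℝ) ^ d := by gcongr
    _ = (j : ℝ) ^ d *
          ((d.factorial : ℝ) * lenR R (R ⧸ J ^ (j * k)) / ((j * k : ℕ) : ℝ) ^ d) := by
        push_cast
        field_simp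
        ring

end LocalRing

section GradedFamily

variable {R : Type*} [CommRing R] {I : ℕ → Ideal R}

theorem pow_le_of_graded (hI0 : I 0 = ⊤) (hImul : ∀ m n, I m * I n ≤ I (m + n)) (a : ℕ) :
    ∀ j, I a ^ j ≤ I (a * j)
  | 0 => by simp [hI0]
  | j + 1 => (Ideal.mul_mono_left (pow_le_of_graded hI0 hImul a j)).trans (hImul _ _)

variable [IsLocalRing R] [IsNoetherianRing R]

theorem exists_maximalIdeal_pow_le_of_graded (hI0 : I 0 = ⊤)
    (hrad : ∀ n, 1 ≤ n → (I n).radical = maximalIdeal R) (m : ℕ) :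
    ∃ C, ∀ r < m, maximalIdeal R ^ C ≤ I r := by
  have hexists : ∀ r, ∃ c, maximalIdeal R ^ c ≤ I r := by
    rintro (_ | r)
    · exact ⟨0, by simp [hI0]⟩
    · simpa [hrad _ r.succ_pos] using
        Ideal.exists_radical_pow_le_of_fg (I (r + 1)) (IsNoetherian.noetherian _)
  choose c hc using hexists
  exact ⟨(Finset.range m).sup c, fun r hr =>
    (Ideal.pow_le_pow_right (Finset.le_sup (Finset.mem_range.mpr hr))).trans (hc r)⟩

theorem exists_pow_div_add_le_of_graded (hI0 : I 0 = ⊤) (hImul : ∀ m n, I m * I n ≤ I (m + n))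
    (hrad : ∀ n, 1 ≤ n → (I n).radical = maximalIdeal R) {m : ℕ} (hm : 1 ≤ m) :
    ∃ C, ∀ n, I m ^ (n / m + C) ≤ I n := by
  obtain ⟨C, hC⟩ := exists_maximalIdeal_pow_le_of_graded hI0 hrad m
  refine ⟨C, fun n => ?_⟩
  have hIm : I m ≤ maximalIdeal R := (hrad m hm) ▸ Ideal.le_radical
  calc I m ^ (n / m + C) = I m ^ (n / m) * I m ^ C := pow_add _ _ _
    _ ≤ I (m * (n / m)) * I (n % m) :=
        Ideal.mul_mono (pow_le_of_graded hI0 hImul m _)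
          ((Ideal.pow_right_mono hIm C).trans (hC _ (Nat.mod_lt n hm)))
    _ ≤ I (m * (n / m) + n % m) := hImul _ _
    _ = I n := by rw [Nat.div_add_mod]

end GradedFamily

theorem stmt0_general (R : Type*) [CommRing R] [IsLocalRing R] [IsNoetherianRing R]
    (d : ℕ)
    (I : ℕ → Ideal R) (hI0 : I 0 = ⊤)
    (hImul : ∀ m n : ℕ, I m * I n ≤ I (m + n))
    (hIprim : ∀ n : ℕ, 1 ≤ n → IsMaxPrimary R (I n))
    (e : ℕ → ℝ)
    (he : ∀ n : ℕ, 1 ≤ n → Tendsto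
      (fun k : ℕ => (Nat.factorial d : ℝ) * lenR R (R ⧸ (I n) ^ k) / (k : ℝ) ^ d)
      atTop (nhds (e n))) :
    ∃ L : ℝ, Tendsto (fun n : ℕ => e n / (n : ℝ) ^ d) atTop (nhds L) := by
  have hrad : ∀ n, 1 ≤ n → (I n).radical = maximalIdeal R := fun n hn => (hIprim n hn).2
  have he_nonneg : ∀ n, 1 ≤ n → 0 ≤ e n := fun n hn => nonneg_of_tendsto_lenR_div (he n hn)
  refine exists_tendsto_div_pow_of_le_add_pow_mul he_nonneg fun m hm => ?_
  obtain ⟨C, hC⟩ := exists_pow_div_add_le_of_graded hI0 hImul hrad hm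
  refine ⟨C, (eventually_ge_atTop m).mono fun n hn => ?_⟩
  calc e n ≤ ((n / m + C : ℕ) : ℝ) ^ d * e m :=
        le_pow_mul_of_pow_le (hrad m hm) (Nat.add_pos_left (Nat.div_pos hn hm) C).ne' (hC n)
          (he m hm) (he n (hm.trans hn))
    _ ≤ ((n : ℝ) / m + C) ^ d * e m := by
        gcongr
        · exact he_nonneg m hm
        · push_cast
          exact add_le_add_left Nat.cast_div_le _

/-- **Theorem (Cutkosky, limits of multiplicities of graded families).**
If `(R, m_R)` is a Noetherian local ring of Krull dimension `d` and `{I_n}` is a graded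
family of `m_R`-primary ideals, then `lim_{n→∞} e(I_n)/n^d` exists, where the
Hilbert–Samuel multiplicity `e(I_n)` is characterized by
`e(I_n) = lim_{k→∞} d! · ℓ_R(R/I_n^k)/k^d`. -/
theorem stmt0 (R : Type*) [CommRing R] [IsLocalRing R] [IsNoetherianRing R]
    (d : ℕ) (hd : ringKrullDim R = d)
    (I : ℕ → Ideal R) (hI0 : I 0 = ⊤)
    (hImul : ∀ m n : ℕ, I m * I n ≤ I (m + n))
    (hIprim : ∀ n : ℕ, 1 ≤ n → IsMaxPrimary R (I n))
    (e : ℕ → ℝ)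
    (he : ∀ n : ℕ, 1 ≤ n → Tendsto
      (fun k : ℕ => (Nat.factorial d : ℝ) * lenR R (R ⧸ (I n) ^ k) / (k : ℝ) ^ d)
      atTop (nhds (e n))) :
    ∃ L : ℝ, Tendsto (fun n : ℕ => e n / (n : ℝ) ^ d) atTop (nhds L) :=
  stmt0_general R d I hI0 hImul hIprim e he
end

section
/- Let S = k[x_1,…,x_d] be a polynomial ring over a field k, let I ⊆ S be an ideal generated by monomials, and let N = (x_1,…,x_d). Suppose r, s are positive integers with N^s ⊆ I. Then dim_k(I/N^r·I) ≤ (s+r)^{d−1}·r. -/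
open Filter

open MvPolynomial in
private lemma stmt14_monomial_add_mem {k : Type*} [Field k] {d : ℕ}
    (I : Ideal (MvPolynomial (Fin d) k)) {a : Fin d →₀ ℕ}
    (h : monomial a (1 : k) ∈ I) (b : Fin d →₀ ℕ) : monomial (a + b) (1 : k) ∈ I := by
  have heq : (monomial (a + b) (1 : k) : MvPolynomial (Fin d) k)
      = monomial b 1 * monomial a 1 := by rw [monomial_mul, one_mul, add_comm]
  rw [heq]
  exact Ideal.mul_mem_left _ _ h

open MvPolynomial in
private lemma stmt14_monomial_mem_of_le {k : Type*} [Field k] {d : ℕ}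
    (I : Ideal (MvPolynomial (Fin d) k)) {a b : Fin d →₀ ℕ} (hab : a ≤ b)
    (h : monomial a (1 : k) ∈ I) : monomial b (1 : k) ∈ I := by
  have := stmt14_monomial_add_mem I h (b - a)
  rwa [add_tsub_cancel_of_le hab] at this

open MvPolynomial in
private lemma stmt14_monomial_mem_pow {k : Type*} [Field k] {d : ℕ} :
    ∀ (s : ℕ) (a : Fin d →₀ ℕ), s ≤ ∑ i, a i →
      (monomial a (1 : k) : MvPolynomial (Fin d) k)
        ∈ (Ideal.span (Set.range (X : Fin d → MvPolynomial (Fin d) k))) ^ s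
  | 0, a, _ => by simp
  | (s + 1), a, h => by
    have hpos : ∃ i, a i ≠ 0 := by
      by_contra hc
      push_neg at hc
      simp [hc] at h
    obtain ⟨i, hi⟩ := hpos
    have hle : Finsupp.single i 1 ≤ a := by
      rw [Finsupp.single_le_iff]; omega
    have heq : a = Finsupp.single i 1 + (a - Finsupp.single i 1) :=
      (add_tsub_cancel_of_le hle).symm
    have hsum : s ≤ ∑ j, (a - Finsupp.single i 1 : Fin d →₀ ℕ) j := by
      have hsplit : ∑ j, a j
          = ∑ j, (Finsupp.single i (1 : ℕ)) j + ∑ j, (a - Finsupp.single i 1 : Fin d →₀ ℕ) j := by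
        rw [← Finset.sum_add_distrib]
        exact Finset.sum_congr rfl fun j _ => by rw [← Finsupp.add_apply, ← heq]
      have hsingle : ∑ j, (Finsupp.single i (1 : ℕ)) j = 1 := by
        simp [Finsupp.single_apply]
      omega
    have hX : (X i : MvPolynomial (Fin d) k) = monomial (Finsupp.single i 1) 1 := by
      simpa using (X_pow_eq_monomial (n := i) (e := 1) (R := k))
    have hfac : (monomial a (1 : k) : MvPolynomial (Fin d) k)
        = X i * monomial (a - Finsupp.single i 1) 1 := by
      rw [hX, monomial_mul, one_mul, ← heq]
    rw [hfac, pow_succ']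
    exact Ideal.mul_mem_mul (Ideal.subset_span (Set.mem_range_self i)) (stmt14_monomial_mem_pow s _ hsum)

open MvPolynomial in
private lemma stmt14_mem_NrI {k : Type*} [Field k] {d r : ℕ}
    (I : Ideal (MvPolynomial (Fin d) k)) {a : Fin d →₀ ℕ} (i : Fin d) (hai : r ≤ a i)
    (h : monomial (a - Finsupp.single i r) (1 : k) ∈ I) :
    monomial a (1 : k)
      ∈ (Ideal.span (Set.range (X : Fin d → MvPolynomial (Fin d) k))) ^ r * I := by
  have hle : Finsupp.single i r ≤ a := Finsupp.single_le_iff.mpr hai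
  have hfac : (monomial a (1 : k) : MvPolynomial (Fin d) k)
      = X i ^ r * monomial (a - Finsupp.single i r) 1 := by
    rw [X_pow_eq_monomial, monomial_mul, one_mul, add_tsub_cancel_of_le hle]
  rw [hfac]
  exact Ideal.mul_mem_mul (Ideal.pow_mem_pow (Ideal.subset_span (Set.mem_range_self i)) r) h

set_option maxHeartbeats 1000000 in
/-- **Lemma 1.**
Let `S = k[x_1, …, x_d]` be a polynomial ring over a field `k`, let `I ⊆ S` be an ideal
generated by monomials and let `N = (x_1, …, x_d)`.  If `r, s` are positive integers
with `N^s ⊆ I`, then `dim_k (I/N^r·I) ≤ (s+r)^{d−1}·r`. -/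
theorem stmt14 (k : Type*) [Field k] (d : ℕ)
    (I : Ideal (MvPolynomial (Fin d) k))
    (hmono : ∃ S : Set (Fin d →₀ ℕ),
      I = Ideal.span ((fun m => MvPolynomial.monomial m (1 : k)) '' S))
    (r s : ℕ) (hr : 0 < r) (hs : 0 < s)
    (hNs : (Ideal.span (Set.range (MvPolynomial.X : Fin d → MvPolynomial (Fin d) k))) ^ s ≤ I) :
    Module.rank k
        ↥(Submodule.map
          (Submodule.mkQ
            (((Ideal.span (Set.range (MvPolynomial.X : Fin d → MvPolynomial (Fin d) k))) ^ r * I :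
              Ideal (MvPolynomial (Fin d) k)) : Submodule (MvPolynomial (Fin d) k) (MvPolynomial (Fin d) k)))
          ((I : Ideal (MvPolynomial (Fin d) k)) : Submodule (MvPolynomial (Fin d) k) (MvPolynomial (Fin d) k))) ≤
      (((s + r) ^ (d - 1) * r : ℕ) : Cardinal) := by

  obtain ⟨Sgen, hSgen⟩ := hmono
  have hmonomem : ∀ p ∈ I, ∀ a ∈ p.support, MvPolynomial.monomial a (1 : k) ∈ I := by
    intro p hp a ha
    rw [hSgen] at hp
    obtain ⟨si, hsi, hle⟩ := MvPolynomial.mem_ideal_span_monomial_image.mp hp a ha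
    refine stmt14_monomial_mem_of_le I hle ?_
    rw [hSgen]
    exact Ideal.subset_span ⟨si, hsi, rfl⟩
  clear hSgen
  cases d with
  | zero =>
    set R := MvPolynomial (Fin 0) k with hR
    set J : Ideal R :=
      (Ideal.span (Set.range (MvPolynomial.X : Fin 0 → R))) ^ r * I with hJ
    have h1 : Module.rank k R = 1 := by
      rw [(MvPolynomial.isEmptyAlgEquiv k (Fin 0)).toLinearEquiv.rank_eq]
      exact Module.rank_self k
    have hrankeq : Module.rank k ↥(Submodule.map J.mkQ (I : Submodule R R))
        = Module.rank k ↥((Submodule.map J.mkQ (I : Submodule R R)).restrictScalars k) :=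
      (((Submodule.restrictScalarsEquiv k R (R ⧸ (J : Submodule R R))
        (Submodule.map J.mkQ (I : Submodule R R))).restrictScalars k).rank_eq).symm
    have h2 : Module.rank k ↥(Submodule.map J.mkQ (I : Submodule R R)) ≤ 1 := by
      rw [hrankeq]
      refine le_trans (Submodule.rank_le _) ?_
      refine le_trans (LinearMap.rank_le_of_surjective (J.mkQ.restrictScalars k)
        (Submodule.mkQ_surjective J)) ?_
      rw [h1]
    refine le_trans h2 ?_
    have : ((0 : ℕ) - 1) = 0 := rfl
    rw [this, pow_zero, one_mul]
    exact_mod_cast Nat.one_le_cast.mpr hr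
  | succ m =>
    classical
    set R := MvPolynomial (Fin (m + 1)) k with hR
    set N : Ideal R := Ideal.span (Set.range (MvPolynomial.X : Fin (m + 1) → R)) with hN
    set J : Ideal R := N ^ r * I with hJ
    have hNsI : ∀ a : Fin (m + 1) →₀ ℕ, s ≤ ∑ i, a i →
        MvPolynomial.monomial a (1 : k) ∈ I :=
      fun a ha => hNs (stmt14_monomial_mem_pow s a ha)
    have hex : ∀ a : Fin (m + 1) →₀ ℕ,
        ∃ c : ℕ, MvPolynomial.monomial (Finsupp.update a 0 c) (1 : k) ∈ I := by
      intro a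
      refine ⟨s, hNsI _ ?_⟩
      have h0 : (Finsupp.update a 0 s) 0 = s := by
        simp [Finsupp.coe_update]
      calc s = (Finsupp.update a 0 s) 0 := h0.symm
        _ ≤ ∑ i, (Finsupp.update a 0 s) i :=
            Finset.single_le_sum (fun i _ => Nat.zero_le _) (Finset.mem_univ 0)
    set t : (Fin (m + 1) →₀ ℕ) → ℕ := fun a => Nat.find (hex a) with ht
    have ht_spec : ∀ a, MvPolynomial.monomial (Finsupp.update a 0 (t a)) (1 : k) ∈ I := by
      intro a; rw [ht]; exact Nat.find_spec (hex a)
    have ht_le' : ∀ a c, MvPolynomial.monomial (Finsupp.update a 0 c) (1 : k) ∈ I → t a ≤ c := by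
      intro a c h; rw [ht]; exact Nat.find_le h
    have ht_le : ∀ a, MvPolynomial.monomial a (1 : k) ∈ I → t a ≤ a 0 := by
      intro a ha
      refine ht_le' a (a 0) ?_
      rwa [Finsupp.update_self]
    have hupd_add : ∀ (a : Fin (m + 1) →₀ ℕ) (c e : ℕ),
        Finsupp.update a 0 (c + e) = Finsupp.update a 0 c + Finsupp.single 0 e := by
      intro a c e
      ext j
      rcases eq_or_ne j 0 with rfl | hj
      · simp [Finsupp.coe_update, Function.update_apply]
      · simp [Finsupp.coe_update, Function.update_apply, hj, Finsupp.single_apply, Ne.symm hj]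
    have ht_mono : ∀ (a : Fin (m + 1) →₀ ℕ) (c : ℕ), t a ≤ c →
        MvPolynomial.monomial (Finsupp.update a 0 c) (1 : k) ∈ I := by
      intro a c hc
      have hsplit : Finsupp.update a 0 c
          = Finsupp.update a 0 (t a) + Finsupp.single 0 (c - t a) := by
        rw [← hupd_add]
        congr 1
        omega
      rw [hsplit]
      exact stmt14_monomial_add_mem I (ht_spec a) _
    set T : Set (Fin (m + 1) →₀ ℕ) :=
      {a | MvPolynomial.monomial a (1 : k) ∈ I ∧ (∀ i, a i < s + r) ∧ a 0 < t a + r} with hT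
    have hmemT : ∀ a : Fin (m + 1) →₀ ℕ, a ∈ T →
        MvPolynomial.monomial a (1 : k) ∈ I ∧ (∀ i, a i < s + r) ∧ a 0 < t a + r := by
      intro a h; rw [hT] at h; exact h
    set V : Set (R ⧸ (J : Submodule R R)) :=
      J.mkQ '' ((fun a => MvPolynomial.monomial a (1 : k)) '' T) with hV
    have hJmem : ∀ a : Fin (m + 1) →₀ ℕ, MvPolynomial.monomial a (1 : k) ∈ I → a ∉ T →
        MvPolynomial.monomial a (1 : k) ∈ J := by
      intro a haI haT
      by_cases hbig : ∀ i, a i < s + r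
      · have h0 : t a + r ≤ a 0 := by
          by_contra h0'
          exact haT (by rw [hT]; exact ⟨haI, hbig, by omega⟩)
        have htle : t a ≤ a 0 := ht_le a haI
        refine stmt14_mem_NrI I 0 (by omega) ?_
        have hsub : a - Finsupp.single 0 r = Finsupp.update a 0 (a 0 - r) := by
          ext j
          rcases eq_or_ne j 0 with rfl | hj
          · simp [Finsupp.coe_update, Function.update_apply, Finsupp.tsub_apply]
          · simp [Finsupp.coe_update, Function.update_apply, hj, Finsupp.single_apply,
              Finsupp.tsub_apply, Ne.symm hj]
        rw [hsub]
        exact ht_mono a _ (by omega)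
      · push_neg at hbig
        obtain ⟨i, hi⟩ := hbig
        refine stmt14_mem_NrI I i (by omega) ?_
        refine hNsI _ ?_
        have hcoord : (a - Finsupp.single i r : Fin (m + 1) →₀ ℕ) i = a i - r := by
          simp [Finsupp.tsub_apply, Finsupp.single_apply]
        calc s ≤ (a - Finsupp.single i r : Fin (m + 1) →₀ ℕ) i := by rw [hcoord]; omega
          _ ≤ ∑ j, (a - Finsupp.single i r : Fin (m + 1) →₀ ℕ) j :=
              Finset.single_le_sum (fun _ _ => Nat.zero_le _) (Finset.mem_univ i)
    have hspan : (Submodule.map J.mkQ (I : Submodule R R)).restrictScalars k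
        ≤ Submodule.span k V := by
      intro x hx
      rw [Submodule.restrictScalars_mem, Submodule.mem_map] at hx
      obtain ⟨p, hp, rfl⟩ := hx
      have hrep : J.mkQ p
          = ∑ a ∈ p.support, MvPolynomial.coeff a p • J.mkQ (MvPolynomial.monomial a (1 : k)) := by
        conv_lhs => rw [MvPolynomial.as_sum p]
        rw [map_sum]
        refine Finset.sum_congr rfl fun a _ => ?_
        rw [← LinearMap.map_smul_of_tower]
        congr 1
        rw [MvPolynomial.smul_monomial, smul_eq_mul, mul_one]
      rw [hrep]
      refine Submodule.sum_mem _ fun a ha => Submodule.smul_mem _ _ ?_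
      have haI : MvPolynomial.monomial a (1 : k) ∈ I := hmonomem p hp a ha
      by_cases hTa : a ∈ T
      · exact Submodule.subset_span ⟨_, ⟨a, hTa, rfl⟩, rfl⟩
      · have hz : J.mkQ (MvPolynomial.monomial a (1 : k)) = 0 := by
          rw [Submodule.mkQ_apply, Submodule.Quotient.mk_eq_zero]
          exact hJmem a haI hTa
        rw [hz]
        exact Submodule.zero_mem _
    have ht_congr : ∀ a b : Fin (m + 1) →₀ ℕ, (∀ j, j ≠ 0 → a j = b j) → t a = t b := by
      intro a b hab
      have hupd : ∀ c, Finsupp.update a 0 c = Finsupp.update b 0 c := by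
        intro c; ext j
        by_cases hj : j = 0
        · simp [Finsupp.coe_update, Function.update_apply, hj]
        · simp [Finsupp.coe_update, Function.update_apply, hj, hab j hj]
      refine le_antisymm (ht_le' a (t b) ?_) (ht_le' b (t a) ?_)
      · rw [hupd]; exact ht_spec b
      · rw [← hupd]; exact ht_spec a
    have hub : ∀ a : Fin (m + 1) →₀ ℕ, a ∈ T → a 0 - t a < r := by
      intro a h
      obtain ⟨h1, h2, h3⟩ := hmemT a h
      have := ht_le a h1
      omega
    have hcard : Cardinal.mk T ≤ (((s + r) ^ m * r : ℕ) : Cardinal) := by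
      refine le_trans (Cardinal.mk_le_of_injective (f := fun x : T =>
        ((fun i => (⟨(x : Fin (m + 1) →₀ ℕ) i.succ, (hmemT x x.2).2.1 i.succ⟩ : Fin (s + r)),
          (⟨(x : Fin (m + 1) →₀ ℕ) 0 - t (x : Fin (m + 1) →₀ ℕ), hub x x.2⟩ : Fin r)) :
          (Fin m → Fin (s + r)) × Fin r)) ?_) ?_
      · rintro ⟨a, haT⟩ ⟨b, hbT⟩ hxy
        have h1 := congrArg Prod.fst hxy
        have h2 := congrArg Prod.snd hxy
        simp only [Fin.mk.injEq] at h2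
        have hne : ∀ j : Fin (m + 1), j ≠ 0 → a j = b j := by
          intro j hj
          obtain ⟨i, rfl⟩ := Fin.exists_succ_eq.mpr hj
          have := congrFun h1 i
          simpa only [Fin.mk.injEq] using this
        have htab : t a = t b := ht_congr a b hne
        have hta := ht_le a (hmemT a haT).1
        have htb := ht_le b (hmemT b hbT).1
        have hwa := (hmemT a haT).2.2
        have hwb := (hmemT b hbT).2.2
        have h0 : a 0 = b 0 := by omega
        refine Subtype.ext ?_
        ext j
        rcases eq_or_ne j 0 with rfl | hj
        · exact h0
        · exact hne j hj
      · rw [Cardinal.mk_fintype]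
        norm_cast
        simp
    have hrankeq : Module.rank k ↥(Submodule.map J.mkQ (I : Submodule R R))
        = Module.rank k ↥((Submodule.map J.mkQ (I : Submodule R R)).restrictScalars k) :=
      (((Submodule.restrictScalarsEquiv k R (R ⧸ (J : Submodule R R))
        (Submodule.map J.mkQ (I : Submodule R R))).restrictScalars k).rank_eq).symm
    have hfinal : Module.rank k ↥(Submodule.map J.mkQ (I : Submodule R R))
        ≤ (((s + r) ^ m * r : ℕ) : Cardinal) := by
      rw [hrankeq]
      refine le_trans (Submodule.rank_mono hspan) ?_
      refine le_trans (rank_span_le (R := k) V) ?_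
      rw [hV]
      refine le_trans (Cardinal.mk_image_le) ?_
      have h2 := Cardinal.mk_image_le_lift
        (f := fun a => MvPolynomial.monomial a (1 : k)) (s := T)
      rw [Cardinal.lift_uzero] at h2
      have h3 := Cardinal.lift_le.mpr hcard
      rw [Cardinal.lift_natCast] at h3
      exact h2.trans h3
    have hd1 : (m + 1) - 1 = m := rfl
    rw [hd1]
    exact hfinal
end

section
/- Let C ⊆ ℝ^d be a closed strictly convex cone with apex at the origin (a closed convex cone satisfying C ∩ (−C) = {0} and having nonempty interior). Call a closed convex set D ⊆ C C-convex if x + C ⊆ D for every x ∈ D, and cobounded if C \ D is bounded; set covol(D) = vol(C \ D), the Lebesgue measure of C \ D. If D_1 and D_2 are cobounded C-convex regions in C, then covol(D_1)^{1/d} + covol(D_2)^{1/d} ≥ covol(D_1 + D_2)^{1/d}, where D_1 + D_2 = {x + y : x ∈ D_1, y ∈ D_2} is the Minkowski sum. -/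
/-!
The cone is invariant under dilations, so `vol (C ∩ closedBall 0 r) = r ^ d * v` with
`v = vol (C ∩ closedBall 0 1)`. If `covol Dᵢ ≤ aᵢ ^ d`, the truncation
`Kᵢ = Dᵢ ∩ closedBall 0 (aᵢ * s)` therefore has volume at least `aᵢ ^ d * (s ^ d * v - 1)`, and
the Brunn–Minkowski inequality gives `vol (K₁ + K₂) ≥ (a₁ + a₂) ^ d * (s ^ d * v - 1)`. Since
`K₁ + K₂ ⊆ (D₁ + D₂) ∩ C ∩ closedBall 0 ((a₁ + a₂) * s)`, the part of `C \ (D₁ + D₂)` inside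
that ball, which is all of it for large `s`, has volume at most `(a₁ + a₂) ^ d`.

Brunn–Minkowski (multiplicative form, for compact convex sets) is proved by induction on the
dimension. Slicing `ℝ × E` along the first factor, the slice volumes `f, g, h` of `K`, `L` and
`l • K + m • L` satisfy `f r ^ l * g w ^ m ≤ h (l * r + m * w)` by the inductive hypothesis and
have interval superlevel sets. For such functions the one-dimensional Prékopa–Leindler inequality
follows from the layer-cake formula, because `|l • A + m • B| = l * |A| + m * |B|` for intervals.
-/

open MeasureTheory Set Module Metric
open scoped Pointwise ENNReal

theorem ENNReal.geom_mean_le_arith_mean2_weighted {l m : ℝ} (hl : 0 < l) (hm : 0 < m)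
    (hlm : l + m = 1) (x y : ℝ≥0∞) :
    x ^ l * y ^ m ≤ ENNReal.ofReal l * x + ENNReal.ofReal m * y := by
  rcases eq_or_ne x ∞ with rfl | hx
  · simp [ENNReal.mul_top (ENNReal.ofReal_pos.2 hl).ne']
  rcases eq_or_ne y ∞ with rfl | hy
  · simp [ENNReal.mul_top (ENNReal.ofReal_pos.2 hm).ne']
  rw [← ENNReal.ofReal_toReal hx, ← ENNReal.ofReal_toReal hy,
    ENNReal.ofReal_rpow_of_nonneg ENNReal.toReal_nonneg hl.le,
    ENNReal.ofReal_rpow_of_nonneg ENNReal.toReal_nonneg hm.le, ← ENNReal.ofReal_mul (by positivity),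
    ← ENNReal.ofReal_mul hl.le, ← ENNReal.ofReal_mul hm.le, ← ENNReal.ofReal_add (by positivity)
    (by positivity)]
  exact ENNReal.ofReal_le_ofReal (Real.geom_mean_le_arith_mean2_weighted hl.le hm.le
    ENNReal.toReal_nonneg ENNReal.toReal_nonneg hlm)

theorem Convex.real_volume_eq {s : Set ℝ} (hs : Convex ℝ s) (hb : Bornology.IsBounded s) :
    volume s = ENNReal.ofReal (sSup s - sInf s) := by
  rcases s.eq_empty_or_nonempty with rfl | hne
  · simp
  refine le_antisymm ?_ ?_
  · rw [← Real.volume_Icc]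
    exact measure_mono fun x hx ↦ ⟨csInf_le hb.bddBelow hx, le_csSup hb.bddAbove hx⟩
  · rw [← Real.volume_Ioo]
    exact measure_mono ((hs.isConnected hne).Ioo_csInf_csSup_subset hb.bddBelow hb.bddAbove)

theorem Convex.real_volume_smul_add_smul {A B : Set ℝ} (hA : Convex ℝ A)
    (hAb : Bornology.IsBounded A) (hAne : A.Nonempty) (hB : Convex ℝ B)
    (hBb : Bornology.IsBounded B) (hBne : B.Nonempty) {l m : ℝ} (hl : 0 ≤ l) (hm : 0 ≤ m) :
    volume (l • A + m • B) = ENNReal.ofReal l * volume A + ENNReal.ofReal m * volume B := by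
  have hlA := hAb.smul₀ l
  have hmB := hBb.smul₀ m
  rw [((hA.smul l).add (hB.smul m)).real_volume_eq (hlA.add hmB), hA.real_volume_eq hAb,
    hB.real_volume_eq hBb, csSup_add (hAne.smul_set) hlA.bddAbove (hBne.smul_set) hmB.bddAbove,
    csInf_add (hAne.smul_set) hlA.bddBelow (hBne.smul_set) hmB.bddBelow,
    Real.sSup_smul_of_nonneg hl, Real.sSup_smul_of_nonneg hm, Real.sInf_smul_of_nonneg hl,
    Real.sInf_smul_of_nonneg hm, ← ENNReal.ofReal_mul hl, ← ENNReal.ofReal_mul hm,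
    ← ENNReal.ofReal_add]
  · simp only [smul_eq_mul]; ring_nf
  · exact mul_nonneg hl (sub_nonneg.2 (Real.sInf_le_sSup A hAb.bddBelow hAb.bddAbove))
  · exact mul_nonneg hm (sub_nonneg.2 (Real.sInf_le_sSup B hBb.bddBelow hBb.bddAbove))

section PrekopaLeindler

variable {f g h : ℝ → ℝ} {l m : ℝ}

theorem lintegral_add_le_of_isLUB_one (hl : 0 < l) (hm : 0 < m) (hlm : l + m = 1)
    (hf₀ : ∀ t, 0 ≤ f t) (hg₀ : ∀ t, 0 ≤ g t)
    (hfm : Measurable f) (hgm : Measurable g) (hhm : Measurable h)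
    (hf₁ : IsLUB (range f) 1) (hg₁ : IsLUB (range g) 1)
    (hfc : ∀ c, 0 < c → Convex ℝ {t | c ≤ f t}) (hgc : ∀ c, 0 < c → Convex ℝ {t | c ≤ g t})
    (hfb : ∀ c, 0 < c → Bornology.IsBounded {t | c ≤ f t})
    (hgb : ∀ c, 0 < c → Bornology.IsBounded {t | c ≤ g t})
    (hfgh : ∀ r w, f r ^ l * g w ^ m ≤ h (l * r + m * w)) :
    ENNReal.ofReal l * (∫⁻ t, ENNReal.ofReal (f t)) + ENNReal.ofReal m * ∫⁻ t, ENNReal.ofReal (g t)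
      ≤ ∫⁻ t, ENNReal.ofReal (h t) := by
  have hh₀ : ∀ t, 0 ≤ h t := fun t ↦ by
    simpa [← add_mul, hlm] using
      (mul_nonneg (Real.rpow_nonneg (hf₀ t) l) (Real.rpow_nonneg (hg₀ t) m)).trans (hfgh t t)
  have level_measurable : ∀ φ : ℝ → ℝ, Measurable fun s : ℝ ↦ volume {t | s ≤ φ t} :=
    fun φ ↦ Antitone.measurable fun _ _ hs ↦ measure_mono fun _ ht ↦ hs.trans ht
  have layer_cake : ∀ φ : ℝ → ℝ, (∀ t, 0 ≤ φ t) → Measurable φ →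
      ∫⁻ t, ENNReal.ofReal (φ t) = ∫⁻ s in Ioi 0, volume {t | s ≤ φ t} := fun φ hφ₀ hφm ↦
    lintegral_eq_lintegral_meas_le volume (ae_of_all _ hφ₀) hφm.aemeasurable
  rw [layer_cake f hf₀ hfm, layer_cake g hg₀ hgm, layer_cake h hh₀ hhm,
    ← lintegral_const_mul _ (level_measurable f), ← lintegral_const_mul _ (level_measurable g),
    ← lintegral_add_left ((level_measurable f).const_mul _)]
  refine setLIntegral_mono_ae (level_measurable h).aemeasurable ?_
  filter_upwards [compl_mem_ae_iff.2 (measure_singleton (1 : ℝ))] with s hs1 (hs : 0 < s)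
  rcases lt_or_gt_of_ne (hs1 : s ≠ 1) with hs1 | hs1
  · obtain ⟨-, ⟨r, rfl⟩, hr, -⟩ := hf₁.exists_between hs1
    obtain ⟨-, ⟨w, rfl⟩, hw, -⟩ := hg₁.exists_between hs1
    rw [← Convex.real_volume_smul_add_smul (hfc s hs) (hfb s hs) ⟨r, hr.le⟩ (hgc s hs)
      (hgb s hs) ⟨w, hw.le⟩ hl.le hm.le]
    refine measure_mono ?_
    rintro _ ⟨_, ⟨r, hr, rfl⟩, _, ⟨w, hw, rfl⟩, rfl⟩
    calc s = s ^ l * s ^ m := by rw [← Real.rpow_add hs, hlm, Real.rpow_one]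
      _ ≤ f r ^ l * g w ^ m := mul_le_mul (Real.rpow_le_rpow hs.le hr hl.le)
          (Real.rpow_le_rpow hs.le hw hm.le) (by positivity) (Real.rpow_nonneg (hf₀ r) l)
      _ ≤ h (l * r + m * w) := hfgh r w
  · have hempty : ∀ φ : ℝ → ℝ, IsLUB (range φ) 1 → {t | s ≤ φ t} = ∅ := fun φ hφ ↦
      eq_empty_of_forall_notMem fun t ht ↦ (hs1.trans_le ht).not_ge (hφ.1 ⟨t, rfl⟩)
    simp [hempty f hf₁, hempty g hg₁]

theorem lintegral_rpow_mul_rpow_le (hl : 0 < l) (hm : 0 < m) (hlm : l + m = 1)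
    (hf₀ : ∀ t, 0 ≤ f t) (hg₀ : ∀ t, 0 ≤ g t)
    (hfm : Measurable f) (hgm : Measurable g) (hhm : Measurable h)
    (hf : BddAbove (range f)) (hg : BddAbove (range g))
    (hfc : ∀ c, 0 < c → Convex ℝ {t | c ≤ f t}) (hgc : ∀ c, 0 < c → Convex ℝ {t | c ≤ g t})
    (hfb : ∀ c, 0 < c → Bornology.IsBounded {t | c ≤ f t})
    (hgb : ∀ c, 0 < c → Bornology.IsBounded {t | c ≤ g t})
    (hfgh : ∀ r w, f r ^ l * g w ^ m ≤ h (l * r + m * w)) :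
    (∫⁻ t, ENNReal.ofReal (f t)) ^ l * (∫⁻ t, ENNReal.ofReal (g t)) ^ m
      ≤ ∫⁻ t, ENNReal.ofReal (h t) := by
  have zero_or_sup_pos : ∀ φ : ℝ → ℝ, (∀ t, 0 ≤ φ t) → BddAbove (range φ) →
      ∫⁻ t, ENNReal.ofReal (φ t) = 0 ∨ 0 < ⨆ t, φ t := fun φ hφ₀ hφ ↦
    ((Real.iSup_nonneg hφ₀).lt_or_eq.imp_right fun h0 ↦ by
      simp [fun t ↦ le_antisymm (h0 ▸ le_ciSup hφ t) (hφ₀ t)]).symm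
  obtain hf0 | hF := zero_or_sup_pos f hf₀ hf
  · simp [hf0, ENNReal.zero_rpow_of_pos hl]
  obtain hg0 | hG := zero_or_sup_pos g hg₀ hg
  · simp [hg0, ENNReal.zero_rpow_of_pos hm]
  set F := ⨆ t, f t
  set G := ⨆ t, g t
  have hFlub : IsLUB (range f) F := isLUB_ciSup hf
  have hGlub : IsLUB (range g) G := isLUB_ciSup hg
  set N := F ^ l * G ^ m
  have hN : 0 < N := by positivity
  have normalize : ∀ {φ : ℝ → ℝ} {c : ℝ}, 0 < c →
      ∫⁻ t, ENNReal.ofReal (c⁻¹ * φ t) = ENNReal.ofReal c⁻¹ * ∫⁻ t, ENNReal.ofReal (φ t) :=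
    fun hc ↦ by
      simp_rw [ENNReal.ofReal_mul (inv_nonneg.2 hc.le)]
      exact lintegral_const_mul' _ _ ENNReal.ofReal_ne_top
  -- Normalize to `sup f = sup g = 1`; weighted AM-GM then recovers the multiplicative form.
  have key := lintegral_add_le_of_isLUB_one (f := fun t ↦ F⁻¹ * f t) (g := fun t ↦ G⁻¹ * g t)
    (h := fun t ↦ N⁻¹ * h t) hl hm hlm
    (fun t ↦ mul_nonneg (inv_nonneg.2 hF.le) (hf₀ t))
    (fun t ↦ mul_nonneg (inv_nonneg.2 hG.le) (hg₀ t))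
    (hfm.const_mul _) (hgm.const_mul _) (hhm.const_mul _)
    (by simpa only [← range_comp, Function.comp_def, inv_mul_cancel₀ hF.ne'] using
      hFlub.mul_left (inv_nonneg.2 hF.le))
    (by simpa only [← range_comp, Function.comp_def, inv_mul_cancel₀ hG.ne'] using
      hGlub.mul_left (inv_nonneg.2 hG.le))
    (fun c hc ↦ by simpa only [le_inv_mul_iff₀ hF] using hfc _ (mul_pos hF hc))
    (fun c hc ↦ by simpa only [le_inv_mul_iff₀ hG] using hgc _ (mul_pos hG hc))
    (fun c hc ↦ by simpa only [le_inv_mul_iff₀ hF] using hfb _ (mul_pos hF hc))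
    (fun c hc ↦ by simpa only [le_inv_mul_iff₀ hG] using hgb _ (mul_pos hG hc))
    (fun r w ↦ by
      rw [Real.mul_rpow (inv_nonneg.2 hF.le) (hf₀ r), Real.mul_rpow (inv_nonneg.2 hG.le) (hg₀ w),
        Real.inv_rpow hF.le, Real.inv_rpow hG.le, mul_mul_mul_comm, ← mul_inv]
      exact mul_le_mul_of_nonneg_left (hfgh r w) (inv_nonneg.2 hN.le))
  simp only [normalize hF, normalize hG, normalize hN] at key
  refine (ENNReal.mul_le_mul_iff_right (ENNReal.ofReal_pos.2 (inv_pos.2 hN)).ne'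
    ENNReal.ofReal_ne_top).1 (le_trans (le_of_eq ?_)
    ((ENNReal.geom_mean_le_arith_mean2_weighted hl hm hlm _ _).trans key))
  rw [ENNReal.mul_rpow_of_nonneg _ _ hl.le, ENNReal.mul_rpow_of_nonneg _ _ hm.le,
    ENNReal.ofReal_rpow_of_nonneg (inv_nonneg.2 hF.le) hl.le,
    ENNReal.ofReal_rpow_of_nonneg (inv_nonneg.2 hG.le) hm.le, mul_mul_mul_comm,
    ← ENNReal.ofReal_mul (by positivity), Real.inv_rpow hF.le, Real.inv_rpow hG.le, ← mul_inv]

end PrekopaLeindler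

def IsBrunnMinkowski {E : Type*} [AddCommGroup E] [Module ℝ E] [TopologicalSpace E]
    [MeasurableSpace E] (μ : Measure E) : Prop :=
  ∀ ⦃K L : Set E⦄, IsCompact K → Convex ℝ K → IsCompact L → Convex ℝ L →
    ∀ ⦃l m : ℝ⦄, 0 < l → 0 < m → l + m = 1 → μ K ^ l * μ L ^ m ≤ μ (l • K + m • L)

section Slices

variable {E : Type*}

theorem IsCompact.prodMk_preimage [TopologicalSpace E] [T2Space E] {S : Set (ℝ × E)}
    (hS : IsCompact S) (t : ℝ) : IsCompact (Prod.mk t ⁻¹' S) :=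
  (hS.image continuous_snd).of_isClosed_subset (hS.isClosed.preimage (.prodMk_right t))
    fun y hy ↦ ⟨(t, y), hy, rfl⟩

theorem Convex.prodMk_preimage [AddCommGroup E] [Module ℝ E] {S : Set (ℝ × E)}
    (hS : Convex ℝ S) (t : ℝ) : Convex ℝ (Prod.mk t ⁻¹' S) := by
  intro x hx y hy a b ha hb hab
  simpa [Prod.smul_mk, ← add_mul, hab] using hS hx hy ha hb hab

theorem smul_prodMk_preimage_add_smul_prodMk_preimage_subset [AddCommGroup E] [Module ℝ E]
    (K L : Set (ℝ × E)) (l m r w : ℝ) :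
    l • (Prod.mk r ⁻¹' K) + m • (Prod.mk w ⁻¹' L) ⊆
      Prod.mk (l * r + m * w) ⁻¹' (l • K + m • L) := by
  rintro _ ⟨_, ⟨p, hp, rfl⟩, _, ⟨q, hq, rfl⟩, rfl⟩
  exact ⟨l • (r, p), smul_mem_smul_set hp, m • (w, q), smul_mem_smul_set hq, by simp⟩

variable [MeasurableSpace E] {μ : Measure E}

noncomputable def sliceVolume (μ : Measure E) (S : Set (ℝ × E)) (t : ℝ) : ℝ :=
  (μ (Prod.mk t ⁻¹' S)).toReal

theorem measurable_sliceVolume [SFinite μ] {S : Set (ℝ × E)} (hS : MeasurableSet S) :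
    Measurable (sliceVolume μ S) :=
  (measurable_measure_prodMk_left hS).ennreal_toReal

variable [TopologicalSpace E]

theorem prod_apply_eq_lintegral_sliceVolume [T2Space E] [OpensMeasurableSpace E] [SFinite μ]
    [IsFiniteMeasureOnCompacts μ] {S : Set (ℝ × E)} (hS : IsCompact S) :
    (volume.prod μ) S = ∫⁻ t, ENNReal.ofReal (sliceVolume μ S t) := by
  rw [Measure.prod_apply hS.measurableSet]
  exact lintegral_congr fun t ↦
    (ENNReal.ofReal_toReal (hS.prodMk_preimage t).measure_lt_top.ne).symm

theorem bddAbove_range_sliceVolume [IsFiniteMeasureOnCompacts μ] {S : Set (ℝ × E)}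
    (hS : IsCompact S) : BddAbove (range (sliceVolume μ S)) :=
  ⟨_, forall_mem_range.2 fun t ↦ ENNReal.toReal_mono (hS.image continuous_snd).measure_lt_top.ne
    (measure_mono fun y hy ↦ ⟨(t, y), hy, rfl⟩)⟩

theorem isBounded_setOf_le_sliceVolume {S : Set (ℝ × E)} (hS : IsCompact S) {c : ℝ}
    (hc : 0 < c) : Bornology.IsBounded {t | c ≤ sliceVolume μ S t} := by
  refine (hS.image continuous_fst).isBounded.subset fun t ht ↦ ?_
  have hne : μ (Prod.mk t ⁻¹' S) ≠ 0 := fun h0 ↦ hc.not_ge (by simpa [sliceVolume, h0] using ht)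
  obtain ⟨y, hy⟩ := nonempty_of_measure_ne_zero hne
  exact ⟨(t, y), hy, rfl⟩

variable [AddCommGroup E] [Module ℝ E] [T2Space E] [ContinuousAdd E] [ContinuousSMul ℝ E]
  [IsFiniteMeasureOnCompacts μ]

theorem IsBrunnMinkowski.sliceVolume_rpow_mul_rpow_le (hμ : IsBrunnMinkowski μ)
    {K L : Set (ℝ × E)} (hKc : IsCompact K) (hKx : Convex ℝ K) (hLc : IsCompact L)
    (hLx : Convex ℝ L) {l m : ℝ} (hl : 0 < l) (hm : 0 < m) (hlm : l + m = 1) (r w : ℝ) :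
    sliceVolume μ K r ^ l * sliceVolume μ L w ^ m ≤
      sliceVolume μ (l • K + m • L) (l * r + m * w) := by
  rw [sliceVolume, sliceVolume, ENNReal.toReal_rpow, ENNReal.toReal_rpow, ← ENNReal.toReal_mul]
  refine ENNReal.toReal_mono (((hKc.smul l).add (hLc.smul m)).prodMk_preimage _).measure_lt_top.ne
    ((hμ (hKc.prodMk_preimage r) (hKx.prodMk_preimage r) (hLc.prodMk_preimage w)
      (hLx.prodMk_preimage w) hl hm hlm).trans (measure_mono ?_))
  exact smul_prodMk_preimage_add_smul_prodMk_preimage_subset K L l m r w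

theorem IsBrunnMinkowski.convex_setOf_le_sliceVolume (hμ : IsBrunnMinkowski μ)
    {K : Set (ℝ × E)} (hKc : IsCompact K) (hKx : Convex ℝ K) {c : ℝ} (hc : 0 < c) :
    Convex ℝ {t | c ≤ sliceVolume μ K t} := by
  refine convex_iff_forall_pos.2 fun r hr w hw a b ha hb hab ↦ ?_
  have hK : a • K + b • K = K := by rw [← hKx.add_smul ha.le hb.le, hab, one_smul]
  calc c = c ^ a * c ^ b := by rw [← Real.rpow_add hc, hab, Real.rpow_one]
    _ ≤ sliceVolume μ K r ^ a * sliceVolume μ K w ^ b :=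
      mul_le_mul (Real.rpow_le_rpow hc.le hr ha.le) (Real.rpow_le_rpow hc.le hw hb.le)
        (by positivity) (Real.rpow_nonneg ENNReal.toReal_nonneg a)
    _ ≤ sliceVolume μ K (a * r + b * w) := by
      simpa only [hK] using hμ.sliceVolume_rpow_mul_rpow_le hKc hKx hKc hKx ha hb hab r w

theorem IsBrunnMinkowski.prod [OpensMeasurableSpace E] [SFinite μ] (hμ : IsBrunnMinkowski μ) :
    IsBrunnMinkowski ((volume : Measure ℝ).prod μ) := by
  intro K L hKc hKx hLc hLx l m hl hm hlm
  have hMc := (hKc.smul l).add (hLc.smul m)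
  rw [prod_apply_eq_lintegral_sliceVolume hKc, prod_apply_eq_lintegral_sliceVolume hLc,
    prod_apply_eq_lintegral_sliceVolume hMc]
  exact lintegral_rpow_mul_rpow_le hl hm hlm (fun _ ↦ ENNReal.toReal_nonneg)
    (fun _ ↦ ENNReal.toReal_nonneg) (measurable_sliceVolume hKc.measurableSet)
    (measurable_sliceVolume hLc.measurableSet) (measurable_sliceVolume hMc.measurableSet)
    (bddAbove_range_sliceVolume hKc) (bddAbove_range_sliceVolume hLc)
    (fun _ ↦ hμ.convex_setOf_le_sliceVolume hKc hKx)
    (fun _ ↦ hμ.convex_setOf_le_sliceVolume hLc hLx)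
    (fun _ ↦ isBounded_setOf_le_sliceVolume hKc) (fun _ ↦ isBounded_setOf_le_sliceVolume hLc)
    (hμ.sliceVolume_rpow_mul_rpow_le hKc hKx hLc hLx hl hm hlm)

end Slices

theorem isBrunnMinkowski_of_subsingleton {E : Type*} [AddCommGroup E] [Module ℝ E]
    [TopologicalSpace E] [MeasurableSpace E] [Subsingleton E] (μ : Measure E) :
    IsBrunnMinkowski μ := by
  intro K L _ _ _ _ l m hl hm hlm
  rcases K.eq_empty_or_nonempty with rfl | hK
  · simp [ENNReal.zero_rpow_of_pos hl]
  rcases L.eq_empty_or_nonempty with rfl | hL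
  · simp [ENNReal.zero_rpow_of_pos hm]
  rw [(hK.smul_set.add hL.smul_set).eq_univ, hK.eq_univ, hL.eq_univ,
    ← ENNReal.rpow_add_of_nonneg _ _ hl.le hm.le, hlm, ENNReal.rpow_one]

theorem IsBrunnMinkowski.map_continuousLinearEquiv {E F : Type*} [AddCommGroup E] [Module ℝ E]
    [TopologicalSpace E] [MeasurableSpace E] [AddCommGroup F] [Module ℝ F] [TopologicalSpace F]
    [ContinuousAdd F] [ContinuousSMul ℝ F] [T2Space F] [MeasurableSpace F] [OpensMeasurableSpace F]
    {μ : Measure E} {ν : Measure F}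
    (hμ : IsBrunnMinkowski μ) (e : E ≃L[ℝ] F) (he : MeasurePreserving e μ ν) :
    IsBrunnMinkowski ν := by
  intro K L hKc hKx hLc hLx l m hl hm hlm
  have hν : ∀ {S : Set F}, IsCompact S → ν S = μ (e.symm '' S) := fun hS ↦ by
    rw [e.image_symm_eq_preimage, he.measure_preimage hS.measurableSet.nullMeasurableSet]
  rw [hν hKc, hν hLc, hν ((hKc.smul l).add (hLc.smul m)), image_add, image_smul_set,
    image_smul_set]
  exact hμ (hKc.image e.symm.continuous) (hKx.linear_image e.symm.toLinearMap)
    (hLc.image e.symm.continuous) (hLx.linear_image e.symm.toLinearMap) hl hm hlm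

theorem isBrunnMinkowski_volume_pi : ∀ d : ℕ, IsBrunnMinkowski (volume : Measure (Fin d → ℝ))
  | 0 => isBrunnMinkowski_of_subsingleton _
  | d + 1 => by
    have he : MeasurePreserving (Fin.consEquivL ℝ fun _ : Fin (d + 1) ↦ ℝ)
        ((volume : Measure ℝ).prod volume) volume := by
      have : ⇑(Fin.consEquivL ℝ fun _ : Fin (d + 1) ↦ ℝ) =
          (MeasurableEquiv.piFinSuccAbove (fun _ : Fin (d + 1) ↦ ℝ) 0).symm := by
        ext x i
        simp [Fin.consEquiv]
      rw [this]
      exact (volume_preserving_piFinSuccAbove _ 0).symm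
    exact (isBrunnMinkowski_volume_pi d).prod.map_continuousLinearEquiv _ he

section Cone

variable {E : Type*} {C : Set E}

theorem smul_cone_eq [AddCommGroup E] [Module ℝ E] (hC : ∀ x ∈ C, ∀ t : ℝ, 0 ≤ t → t • x ∈ C)
    {r : ℝ} (hr : 0 < r) : r • C = C :=
  (smul_set_subset_iff.2 fun x hx ↦ hC x hx r hr.le).antisymm fun x hx ↦
    ⟨r⁻¹ • x, hC x hx _ (inv_nonneg.2 hr.le), smul_inv_smul₀ hr.ne' x⟩

theorem Convex.add_self_subset_of_cone [AddCommGroup E] [Module ℝ E] (hCx : Convex ℝ C)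
    (hC : ∀ x ∈ C, ∀ t : ℝ, 0 ≤ t → t • x ∈ C) : C + C ⊆ C := by
  have h := hCx.add_smul (zero_le_one' ℝ) zero_le_one
  rw [one_smul] at h
  rw [← h]
  exact smul_set_subset_iff.2 fun x hx ↦ hC x hx _ (by norm_num)

theorem isBounded_cone_diff_add [SeminormedAddCommGroup E] [NormedSpace ℝ E]
    (hC : ∀ x ∈ C, ∀ t : ℝ, 0 ≤ t → t • x ∈ C) {D₁ D₂ : Set E}
    (h₁ : Bornology.IsBounded (C \ D₁)) (h₂ : Bornology.IsBounded (C \ D₂)) :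
    Bornology.IsBounded (C \ (D₁ + D₂)) := by
  refine ((h₁.union h₂).smul₀ 2).subset fun x ⟨hxC, hx⟩ ↦
    ⟨(2 : ℝ)⁻¹ • x, ?_, smul_inv_smul₀ two_ne_zero x⟩
  have hy := hC x hxC 2⁻¹ (by norm_num)
  by_contra hD
  simp only [mem_union, mem_sdiff, not_or, not_and, not_not] at hD
  exact hx ⟨_, hD.1 hy, _, hD.2 hy, show (2 : ℝ)⁻¹ • x + (2 : ℝ)⁻¹ • x = x by
    rw [← add_smul]; norm_num⟩

end Cone

section AddHaar

variable {E : Type*} [NormedAddCommGroup E] [NormedSpace ℝ E] [FiniteDimensional ℝ E]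
  [MeasurableSpace E] [BorelSpace E] {μ : Measure E} [μ.IsAddHaarMeasure]

theorem IsBrunnMinkowski.ofReal_pow_mul_le_measure_add (hμ : IsBrunnMinkowski μ) {K L : Set E}
    (hKc : IsCompact K) (hKx : Convex ℝ K) (hLc : IsCompact L) (hLx : Convex ℝ L) {a b : ℝ}
    (ha : 0 < a) (hb : 0 < b) {V : ℝ≥0∞} (hK : ENNReal.ofReal (a ^ finrank ℝ E) * V ≤ μ K)
    (hL : ENNReal.ofReal (b ^ finrank ℝ E) * V ≤ μ L) :
    ENNReal.ofReal ((a + b) ^ finrank ℝ E) * V ≤ μ (K + L) := by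
  set X := ENNReal.ofReal ((a + b) ^ finrank ℝ E) * V
  have hab : 0 < a + b := add_pos ha hb
  have rescale : ∀ {c : ℝ} {S : Set E}, 0 < c → ENNReal.ofReal (c ^ finrank ℝ E) * V ≤ μ S →
      X ≤ μ (((a + b) / c) • S) := fun {c S} hc hS ↦ by
    rw [Measure.addHaar_smul_of_nonneg μ (div_pos hab hc).le]
    calc X = ENNReal.ofReal (((a + b) / c) ^ finrank ℝ E) *
          (ENNReal.ofReal (c ^ finrank ℝ E) * V) := by
          rw [← mul_assoc, ← ENNReal.ofReal_mul (pow_nonneg (div_pos hab hc).le _), ← mul_pow,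
            div_mul_cancel₀ _ hc.ne']
      _ ≤ _ := by gcongr
  have hl : 0 < a / (a + b) := by positivity
  have hm : 0 < b / (a + b) := by positivity
  have hlm : a / (a + b) + b / (a + b) = 1 := by rw [← add_div, div_self hab.ne']
  have hKL : (a / (a + b)) • (((a + b) / a) • K) + (b / (a + b)) • (((a + b) / b) • L) = K + L := by
    rw [smul_smul, smul_smul, div_mul_div_cancel₀ hab.ne', div_mul_div_cancel₀ hab.ne',
      div_self ha.ne', div_self hb.ne', one_smul, one_smul]
  calc X = X ^ (a / (a + b)) * X ^ (b / (a + b)) := by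
        rw [← ENNReal.rpow_add_of_nonneg _ _ hl.le hm.le, hlm, ENNReal.rpow_one]
    _ ≤ μ (((a + b) / a) • K) ^ (a / (a + b)) * μ (((a + b) / b) • L) ^ (b / (a + b)) := by
        gcongr
        exacts [rescale ha hK, rescale hb hL]
    _ ≤ μ (K + L) := hKL ▸ hμ (hKc.smul _) (hKx.smul _) (hLc.smul _) (hLx.smul _) hl hm hlm

theorem addHaar_cone_inter_closedBall {C : Set E} (hC : ∀ x ∈ C, ∀ t : ℝ, 0 ≤ t → t • x ∈ C)
    {r : ℝ} (hr : 0 < r) :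
    μ (C ∩ closedBall 0 r) = ENNReal.ofReal (r ^ finrank ℝ E) * μ (C ∩ closedBall 0 1) := by
  rw [← Measure.addHaar_smul_of_nonneg μ hr.le, smul_set_inter₀ hr.ne',
    smul_unitClosedBall_of_nonneg hr.le, smul_cone_eq hC hr]

theorem ofReal_pow_mul_le_measure_inter_closedBall {C D : Set E}
    (hC : ∀ x ∈ C, ∀ t : ℝ, 0 ≤ t → t • x ∈ C) {a s : ℝ} (ha : 0 < a) (hs : 0 < s)
    (hcov : μ (C \ D) ≤ ENNReal.ofReal (a ^ finrank ℝ E)) :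
    ENNReal.ofReal (a ^ finrank ℝ E) *
        (ENNReal.ofReal (s ^ finrank ℝ E) * μ (C ∩ closedBall 0 1) - 1) ≤
      μ (D ∩ closedBall 0 (a * s)) := by
  rw [ENNReal.mul_sub fun _ _ ↦ ENNReal.ofReal_ne_top, mul_one, ← mul_assoc,
    ← ENNReal.ofReal_mul (by positivity), ← mul_pow,
    ← addHaar_cone_inter_closedBall hC (by positivity),
    tsub_le_iff_right]
  calc μ (C ∩ closedBall 0 (a * s)) ≤ μ (D ∩ closedBall 0 (a * s) ∪ C \ D) :=
        measure_mono fun x ⟨hxC, hxB⟩ ↦ by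
          by_cases hxD : x ∈ D
          exacts [Or.inl ⟨hxD, hxB⟩, Or.inr ⟨hxC, hxD⟩]
    _ ≤ μ (D ∩ closedBall 0 (a * s)) + μ (C \ D) := measure_union_le _ _
    _ ≤ _ := by gcongr

theorem IsBrunnMinkowski.measure_cone_diff_add_le (hμ : IsBrunnMinkowski μ) {C D₁ D₂ : Set E}
    (hCx : Convex ℝ C) (hC : ∀ x ∈ C, ∀ t : ℝ, 0 ≤ t → t • x ∈ C)
    (hD₁c : IsClosed D₁) (hD₂c : IsClosed D₂) (hD₁x : Convex ℝ D₁) (hD₂x : Convex ℝ D₂)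
    (hD₁ : D₁ ⊆ C) (hD₂ : D₂ ⊆ C) (hW : Bornology.IsBounded (C \ (D₁ + D₂))) {a b : ℝ}
    (ha : 0 < a) (hb : 0 < b) (h₁ : μ (C \ D₁) ≤ ENNReal.ofReal (a ^ finrank ℝ E))
    (h₂ : μ (C \ D₂) ≤ ENNReal.ofReal (b ^ finrank ℝ E)) :
    μ (C \ (D₁ + D₂)) ≤ ENNReal.ofReal ((a + b) ^ finrank ℝ E) := by
  obtain ⟨R, hR⟩ := hW.subset_closedBall 0
  obtain ⟨s, hs, hsR⟩ : ∃ s, 0 < s ∧ R ≤ (a + b) * s := ((Filter.eventually_gt_atTop 0).and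
    ((Filter.tendsto_id.const_mul_atTop (add_pos ha hb)).eventually_ge_atTop R)).exists
  set Y := ENNReal.ofReal (s ^ finrank ℝ E) * μ (C ∩ closedBall 0 1)
  set K₁ := D₁ ∩ closedBall 0 (a * s)
  set K₂ := D₂ ∩ closedBall 0 (b * s)
  have hK₁ : IsCompact K₁ := (isCompact_closedBall 0 _).inter_left hD₁c
  have hK₂ : IsCompact K₂ := (isCompact_closedBall 0 _).inter_left hD₂c
  have hK : ENNReal.ofReal ((a + b) ^ finrank ℝ E) * (Y - 1) ≤ μ (K₁ + K₂) :=
    hμ.ofReal_pow_mul_le_measure_add hK₁ (hD₁x.inter (convex_closedBall 0 _)) hK₂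
      (hD₂x.inter (convex_closedBall 0 _)) ha hb
      (ofReal_pow_mul_le_measure_inter_closedBall hC ha hs h₁)
      (ofReal_pow_mul_le_measure_inter_closedBall hC hb hs h₂)
  have hKC : K₁ + K₂ ⊆ C ∩ closedBall 0 ((a + b) * s) := by
    rintro _ ⟨x, ⟨hx, hxs⟩, y, ⟨hy, hys⟩, rfl⟩
    refine ⟨hCx.add_self_subset_of_cone hC (add_mem_add (hD₁ hx) (hD₂ hy)), ?_⟩
    have := closedBall_add_closedBall (E := E) (by positivity : 0 ≤ a * s)
      (by positivity : 0 ≤ b * s) 0 0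
    rw [zero_add, ← add_mul] at this
    exact this ▸ add_mem_add hxs hys
  have hdisj : Disjoint (C \ (D₁ + D₂)) (K₁ + K₂) := disjoint_left.2 fun x hx hxK ↦
    hx.2 (add_subset_add inter_subset_left inter_subset_left hxK)
  have hsplit : μ (C \ (D₁ + D₂)) + μ (K₁ + K₂) ≤ ENNReal.ofReal ((a + b) ^ finrank ℝ E) * Y := by
    rw [← measure_union hdisj (hK₁.add hK₂).measurableSet, ← mul_assoc,
      ← ENNReal.ofReal_mul (by positivity), ← mul_pow,
      ← addHaar_cone_inter_closedBall hC (by positivity)]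
    exact measure_mono (union_subset
      (fun x hx ↦ ⟨hx.1, closedBall_subset_closedBall hsR (hR hx)⟩) hKC)
  calc μ (C \ (D₁ + D₂))
      ≤ ENNReal.ofReal ((a + b) ^ finrank ℝ E) * Y - μ (K₁ + K₂) :=
        ENNReal.le_sub_of_add_le_right (hK₁.add hK₂).measure_lt_top.ne hsplit
    _ ≤ ENNReal.ofReal ((a + b) ^ finrank ℝ E) * Y -
          ENNReal.ofReal ((a + b) ^ finrank ℝ E) * (Y - 1) := tsub_le_tsub_left hK _
    _ = ENNReal.ofReal ((a + b) ^ finrank ℝ E) * (Y - (Y - 1)) :=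
        (ENNReal.mul_sub fun _ _ ↦ ENNReal.ofReal_ne_top).symm
    _ ≤ ENNReal.ofReal ((a + b) ^ finrank ℝ E) := mul_le_of_le_one_right' tsub_tsub_le

end AddHaar

theorem ENNReal.le_ofReal_rpow_one_div_add_pow {n : ℕ} (hn : n ≠ 0) {x : ℝ≥0∞} (hx : x ≠ ∞)
    {δ : ℝ} (hδ : 0 ≤ δ) : x ≤ ENNReal.ofReal ((x.toReal ^ ((1 : ℝ) / n) + δ) ^ n) := by
  conv_lhs => rw [← ENNReal.ofReal_toReal hx, ← Real.rpow_inv_natCast_pow ENNReal.toReal_nonneg hn]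
  rw [one_div]
  exact ENNReal.ofReal_le_ofReal
    (pow_le_pow_left₀ (Real.rpow_nonneg ENNReal.toReal_nonneg _) (le_add_of_nonneg_right hδ) n)

theorem ENNReal.toReal_rpow_one_div_le {n : ℕ} (hn : n ≠ 0) {x : ℝ≥0∞} {c : ℝ} (hc : 0 ≤ c)
    (h : x ≤ ENNReal.ofReal (c ^ n)) : x.toReal ^ ((1 : ℝ) / n) ≤ c :=
  calc x.toReal ^ ((1 : ℝ) / n) ≤ (c ^ n) ^ ((1 : ℝ) / n) :=
        Real.rpow_le_rpow ENNReal.toReal_nonneg (ENNReal.toReal_le_of_le_ofReal (by positivity) h)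
          (by positivity)
    _ = c := by rw [one_div, Real.pow_rpow_inv_natCast hc hn]

theorem stmt18_general (d : ℕ)
    (C : Set (Fin d → ℝ))
    (hCconvex : Convex ℝ C)
    (hCcone : ∀ x ∈ C, ∀ t : ℝ, 0 ≤ t → t • x ∈ C)
    (D₁ D₂ : Set (Fin d → ℝ))
    (hD₁closed : IsClosed D₁) (hD₂closed : IsClosed D₂)
    (hD₁convex : Convex ℝ D₁) (hD₂convex : Convex ℝ D₂)
    (hD₁sub : D₁ ⊆ C) (hD₂sub : D₂ ⊆ C)
    (hD₁cob : Bornology.IsBounded (C \ D₁))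
    (hD₂cob : Bornology.IsBounded (C \ D₂)) :
    (volume (C \ (D₁ + D₂))).toReal ^ ((1 : ℝ) / d) ≤
      (volume (C \ D₁)).toReal ^ ((1 : ℝ) / d) +
        (volume (C \ D₂)).toReal ^ ((1 : ℝ) / d) := by
  rcases eq_or_ne d 0 with rfl | hd
  · simp
  refine le_of_forall_pos_le_add fun ε hε ↦ ?_
  have hcov : ∀ {D : Set (Fin d → ℝ)}, Bornology.IsBounded (C \ D) →
      volume (C \ D) ≤ ENNReal.ofReal
        (((volume (C \ D)).toReal ^ ((1 : ℝ) / d) + ε / 2) ^ finrank ℝ (Fin d → ℝ)) := by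
    intro D hD
    rw [finrank_fin_fun]
    exact ENNReal.le_ofReal_rpow_one_div_add_pow hd hD.measure_lt_top.ne (half_pos hε).le
  have key := (isBrunnMinkowski_volume_pi d).measure_cone_diff_add_le hCconvex hCcone
    hD₁closed hD₂closed hD₁convex hD₂convex hD₁sub hD₂sub
    (isBounded_cone_diff_add hCcone hD₁cob hD₂cob) (by positivity) (by positivity)
    (hcov hD₁cob) (hcov hD₂cob)
  rw [finrank_fin_fun] at key
  linarith [ENNReal.toReal_rpow_one_div_le hd (by positivity) key]

/-- **Theorem (Khovanskii–Timorin, reversed Brunn–Minkowski inequality).**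
Let `C ⊆ ℝ^d` be a closed strictly convex cone with apex at the origin (a closed convex
cone with `C ∩ (−C) = {0}` and nonempty interior).  If `D₁` and `D₂` are cobounded
`C`-convex regions in `C`, then
`covol(D₁)^{1/d} + covol(D₂)^{1/d} ≥ covol(D₁ + D₂)^{1/d}`, where
`covol(D) = vol(C \ D)` and `D₁ + D₂` is the Minkowski sum. -/
theorem stmt18 (d : ℕ)
    (C : Set (Fin d → ℝ))
    (hCclosed : IsClosed C) (hCconvex : Convex ℝ C)
    (hCcone : ∀ x ∈ C, ∀ t : ℝ, 0 ≤ t → t • x ∈ C)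
    (hC0 : (0 : Fin d → ℝ) ∈ C)
    (hCstrict : C ∩ (-C) = {0})
    (hCint : (interior C).Nonempty)
    (D₁ D₂ : Set (Fin d → ℝ))
    (hD₁closed : IsClosed D₁) (hD₂closed : IsClosed D₂)
    (hD₁convex : Convex ℝ D₁) (hD₂convex : Convex ℝ D₂)
    (hD₁sub : D₁ ⊆ C) (hD₂sub : D₂ ⊆ C)
    (hD₁C : ∀ x ∈ D₁, ∀ y ∈ C, x + y ∈ D₁)
    (hD₂C : ∀ x ∈ D₂, ∀ y ∈ C, x + y ∈ D₂)
    (hD₁cob : Bornology.IsBounded (C \ D₁))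
    (hD₂cob : Bornology.IsBounded (C \ D₂)) :
    (volume (C \ (D₁ + D₂))).toReal ^ ((1 : ℝ) / d) ≤
      (volume (C \ D₁)).toReal ^ ((1 : ℝ) / d) +
        (volume (C \ D₂)).toReal ^ ((1 : ℝ) / d) :=
  stmt18_general d C hCconvex hCcone D₁ D₂ hD₁closed hD₂closed hD₁convex hD₂convex hD₁sub hD₂sub
    hD₁cob hD₂cob
end
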